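/- arXiv:0709.1110 — 5 statements merged into one kernel-verified Lean document; each statement's English description precedes it below -/
import Mathlib

section
/- The map s : ℝ² × ℝ² → ℝ² defined by s_{(a,ℓ)}(a',ℓ') = (2a − a', 2cosh(2(a−a'))ℓ − ℓ') satisfies: (i) each s_x is involutive, i.e. s_x(s_x(y)) = y; (ii) s_x(x) = x; (iii) s_x ∘ s_y ∘ s_x = s_{s_x(y)} for all x, y ∈ ℝ². -/
/-- Symmetry map of the solvable symmetric surface. -/
noncomputable def symM (x y : ℝ × ℝ) : ℝ × ℝ :=
  (2 * x.1 - y.1, 2 * Real.cosh (2 * (x.1 - y.1)) * x.2 - y.2)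

/-!
The map has the shape `s_x y = (2 x₁ - y₁, φ (x₁ - y₁) x₂ - y₂)` with `φ t = 2 cosh (2t)`.
For any such map the symmetric-space axioms reduce to properties of `φ`:
evenness gives involutivity, `φ 0 = 2` gives `s_x x = x`, and the law `s_x s_y s_x = s_{s_x y}`
is, in the second coordinate, exactly d'Alembert's functional equation
`φ (u + v) + φ (u - v) = φ u * φ v`, which `2 cosh (2t)` satisfies.
-/

def twistedReflection (φ : ℝ → ℝ) (x y : ℝ × ℝ) : ℝ × ℝ :=
  (2 * x.1 - y.1, φ (x.1 - y.1) * x.2 - y.2)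

namespace twistedReflection

variable {φ : ℝ → ℝ}

theorem involutive (hφ : Function.Even φ) (x : ℝ × ℝ) :
    Function.Involutive (twistedReflection φ x) := by
  intro y
  have hsub : x.1 - (2 * x.1 - y.1) = -(x.1 - y.1) := by ring
  ext <;> simp only [twistedReflection, hsub, hφ (x.1 - y.1)] <;> ring

theorem apply_self (hφ : φ 0 = 2) (x : ℝ × ℝ) : twistedReflection φ x x = x := by
  ext <;> simp only [twistedReflection, sub_self, hφ] <;> ring

theorem conj_eq (hφ : Function.Even φ) (hd : ∀ u v, φ (u + v) + φ (u - v) = φ u * φ v)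
    (x y z : ℝ × ℝ) :
    twistedReflection φ x (twistedReflection φ y (twistedReflection φ x z)) =
      twistedReflection φ (twistedReflection φ x y) z := by
  obtain ⟨a, α⟩ := x
  obtain ⟨b, β⟩ := y
  obtain ⟨c, γ⟩ := z
  -- with `u = 2a - b - c` and `v = a - b`, the three arguments of `φ` on the left are
  -- `u + v`, `-u` and `u - v`
  have hd' := hd (2 * a - b - c) (a - b)
  have hneg := hφ (2 * a - b - c)
  simp only [twistedReflection, Prod.mk.injEq]
  refine ⟨by ring, ?_⟩
  rw [show a - (2 * b - (2 * a - c)) = 2 * a - b - c + (a - b) by ring,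
    show b - (2 * a - c) = -(2 * a - b - c) by ring,
    show a - c = 2 * a - b - c - (a - b) by ring, hneg]
  linear_combination α * hd'

end twistedReflection

theorem Real.cosh_add_add_cosh_sub (u v : ℝ) :
    Real.cosh (u + v) + Real.cosh (u - v) = 2 * Real.cosh u * Real.cosh v := by
  rw [Real.cosh_add, Real.cosh_sub]
  ring

theorem symM_eq_twistedReflection :
    symM = twistedReflection (fun t => 2 * Real.cosh (2 * t)) := rfl

theorem symM_symmetric_space :
    (∀ x y : ℝ × ℝ, symM x (symM x y) = y) ∧
    (∀ x : ℝ × ℝ, symM x x = x) ∧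
    (∀ x y z : ℝ × ℝ, symM x (symM y (symM x z)) = symM (symM x y) z) := by
  have heven : Function.Even fun t : ℝ => 2 * Real.cosh (2 * t) := fun t => by
    simp only [mul_neg, Real.cosh_neg]
  have hdalembert : ∀ u v : ℝ, 2 * Real.cosh (2 * (u + v)) + 2 * Real.cosh (2 * (u - v)) =
      2 * Real.cosh (2 * u) * (2 * Real.cosh (2 * v)) := fun u v => by
    rw [mul_add, mul_sub]
    linear_combination 2 * Real.cosh_add_add_cosh_sub (2 * u) (2 * v)
  rw [symM_eq_twistedReflection]
  exact ⟨fun x => twistedReflection.involutive heven x,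
    twistedReflection.apply_self (by simp),
    twistedReflection.conj_eq heven hdalembert⟩
end

section
/- For any three points x, y, z in M = ℝ² (with the symmetry map s of the solvable symmetric surface), the equation s_x(s_y(s_z(t))) = t admits a unique solution t ∈ M. -/
open Function

variable {K : Type*} [Field K]

def IsFiberReflection (φ : K × K → K × K) : Prop :=
  ∃ (c : K) (g : K → K), ∀ t, φ t = (c - t.1, g t.1 - t.2)

def IsFiberTranslation (φ : K × K → K × K) : Prop :=
  ∃ (c : K) (g : K → K), ∀ t, φ t = (t.1 + c, g t.1 + t.2)

namespace IsFiberReflection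

variable {φ ψ : K × K → K × K}

theorem comp (hφ : IsFiberReflection φ) (hψ : IsFiberReflection ψ) :
    IsFiberTranslation (φ ∘ ψ) := by
  obtain ⟨c, g, hφ⟩ := hφ
  obtain ⟨d, h, hψ⟩ := hψ
  refine ⟨c - d, fun a ↦ g (d - a) - h a, fun t ↦ ?_⟩
  simp only [comp_apply, hψ, hφ, Prod.mk.injEq]
  constructor <;> ring

theorem comp_fiberTranslation (hφ : IsFiberReflection φ) (hψ : IsFiberTranslation ψ) :
    IsFiberReflection (φ ∘ ψ) := by
  obtain ⟨c, g, hφ⟩ := hφ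
  obtain ⟨d, h, hψ⟩ := hψ
  refine ⟨c - d, fun a ↦ g (a + d) - h a, fun t ↦ ?_⟩
  simp only [comp_apply, hψ, hφ, Prod.mk.injEq]
  constructor <;> ring

theorem existsUnique_isFixedPt [NeZero (2 : K)] (hφ : IsFiberReflection φ) :
    ∃! t, IsFixedPt φ t := by
  obtain ⟨c, g, hφ⟩ := hφ
  have fixed_iff (t : K × K) : IsFixedPt φ t ↔ t = (c / 2, g (c / 2) / 2) := by
    obtain ⟨a, ℓ⟩ := t
    have h2 : (2 : K) ≠ 0 := two_ne_zero
    simp only [IsFixedPt, hφ, Prod.mk.injEq]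
    constructor
    · rintro ⟨ha, hℓ⟩
      obtain rfl : a = c / 2 := by field_simp; linear_combination -ha
      exact ⟨rfl, by field_simp; linear_combination -hℓ⟩
    · rintro ⟨rfl, rfl⟩
      constructor <;> field_simp <;> ring
  exact ⟨_, (fixed_iff _).2 rfl, fun t ht ↦ (fixed_iff t).1 ht⟩

end IsFiberReflection

theorem isFiberReflection_symM (x : ℝ × ℝ) : IsFiberReflection (symM x) :=
  ⟨2 * x.1, fun a ↦ 2 * Real.cosh (2 * (x.1 - a)) * x.2, fun _ ↦ rfl⟩

/-- The equation s_x s_y s_z (t) = t has a unique solution. -/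
theorem triple_symmetry_unique_fixed_point (x y z : ℝ × ℝ) :
    ∃! t : ℝ × ℝ, symM x (symM y (symM z t)) = t :=
  ((isFiberReflection_symM x).comp_fiberTranslation
    ((isFiberReflection_symM y).comp (isFiberReflection_symM z))).existsUnique_isFixedPt
end

section
/- The canonical admissible function S_can(x₀,x₁,x₂) = (1/2)·[sinh(2(a₀−a₁))ℓ₂ + sinh(2(a₁−a₂))ℓ₀ + sinh(2(a₂−a₀))ℓ₁] on M = ℝ² is invariant under the diagonal action of every symmetry: S_can(s_m(x₀), s_m(x₁), s_m(x₂)) = S_can(x₀,x₁,x₂) for all m, x₀, x₁, x₂ ∈ M. -/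
/-- The canonical admissible three-point function on M. -/
noncomputable def Scan (x₀ x₁ x₂ : ℝ × ℝ) : ℝ :=
  (1 / 2) * (Real.sinh (2 * (x₀.1 - x₁.1)) * x₂.2
    + Real.sinh (2 * (x₁.1 - x₂.1)) * x₀.2
    + Real.sinh (2 * (x₂.1 - x₀.1)) * x₁.2)

/-! The symmetry `s_m` reflects the `a`-coordinates through `a_m`, so every `sinh` factor of `Scan`
changes sign, which the `-ℓᵢ` parts of the new `ℓ`-coordinates compensate. What remains is
`-ℓ_m` times a cyclic sum of `sinh · cosh` products, and that sum vanishes identically. -/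

open Real

theorem Real.sinh_sub_mul_cosh_sub_add_cyclic (x y z t : ℝ) :
    sinh (x - y) * cosh (t - z) + sinh (y - z) * cosh (t - x)
      + sinh (z - x) * cosh (t - y) = 0 := by
  simp only [sinh_sub, cosh_sub]
  ring

theorem two_mul_symM_fst_sub (m x y : ℝ × ℝ) :
    2 * ((symM m x).1 - (symM m y).1) = -(2 * (x.1 - y.1)) := by
  simp only [symM]
  ring

theorem Scan_symmetry_invariant (m x₀ x₁ x₂ : ℝ × ℝ) :
    Scan (symM m x₀) (symM m x₁) (symM m x₂) = Scan x₀ x₁ x₂ := by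
  have hcyclic := sinh_sub_mul_cosh_sub_add_cyclic (2 * x₀.1) (2 * x₁.1) (2 * x₂.1) (2 * m.1)
  simp only [← mul_sub] at hcyclic
  simp only [Scan, two_mul_symM_fst_sub, sinh_neg]
  simp only [symM]
  linear_combination (-m.2) * hcyclic
end

section
/- The canonical function S_can(x₀,x₁,x₂) = (1/2)·Σ_{cyclic} sinh(2(a₀−a₁))ℓ₂ satisfies the antisymmetry property S_can(x, s_x(y), z) = −S_can(x, y, z) for all x, y, z ∈ ℝ². -/
theorem Real.sinh_add_add_sinh_sub (v u : ℝ) :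
    Real.sinh (v + u) + Real.sinh (v - u) = 2 * Real.sinh v * Real.cosh u := by
  rw [Real.sinh_add, Real.sinh_sub]
  ring

theorem Scan_antisymmetry (x y z : ℝ × ℝ) :
    Scan x (symM x y) z = - Scan x y z := by
  set u := 2 * (x.1 - y.1)
  set v := 2 * (x.1 - z.1)
  have hs₀₁ : 2 * (x.1 - (symM x y).1) = -u := by simp only [symM, u]; ring
  have hs₁₂ : 2 * ((symM x y).1 - z.1) = v + u := by simp only [symM, u, v]; ring
  have hsℓ : (symM x y).2 = 2 * Real.cosh u * x.2 - y.2 := rfl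
  have h₁₂ : 2 * (y.1 - z.1) = v - u := by ring
  have h₂₀ : 2 * (z.1 - x.1) = -v := by ring
  simp only [Scan, hs₀₁, hs₁₂, h₁₂, h₂₀, hsℓ, Real.sinh_neg]
  linear_combination (1 / 2 : ℝ) * x.2 * Real.sinh_add_add_sinh_sub v u
end

section
/- The linear map φ ↦ (t ↦ cosh(t)·φ(sinh(t))) maps the Schwartz space S(ℝ) continuously into itself. -/
/-!
Since `cosh t = √(1 + sinh² t)`, the function `t ↦ cosh t · φ(sinh t)` is `ψ ∘ sinh` for the
Schwartz function `ψ = √(1 + u²) · φ`. As `sinh` solves `g' = w ∘ g` with `w u = √(1 + u²)` of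
temperate growth, the chain rule gives `(ψ ∘ sinh)⁽ⁿ⁾ = ((w · d/du)ⁿ ψ) ∘ sinh`, and `w · d/du` is
continuous on `𝓢(ℝ)`. Together with `|t| ≤ |sinh t|`, every Schwartz seminorm of `ψ ∘ sinh` is
bounded by a seminorm of a continuous linear image of `ψ`.
-/

open SchwartzMap

noncomputable section

namespace SchwartzMap

variable {𝕜 D E F G : Type*} [RCLike 𝕜]
  [NormedAddCommGroup D] [NormedSpace ℝ D] [NormedAddCommGroup E] [NormedSpace ℝ E]
  [NormedSpace 𝕜 E] [NormedAddCommGroup F] [NormedSpace ℝ F] [NormedAddCommGroup G]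
  [NormedSpace ℝ G] [NormedSpace 𝕜 G]

theorem exists_seminorm_comp_le (B : 𝓢(D, E) →L[𝕜] 𝓢(F, G)) (k n : ℕ) :
    ∃ (s : Finset (ℕ × ℕ)) (C : ℝ), 0 ≤ C ∧
      ∀ f, SchwartzMap.seminorm 𝕜 k n (B f) ≤ C * s.sup (schwartzSeminormFamily 𝕜 D E) f := by
  obtain ⟨s, C, -, hC⟩ := Seminorm.bound_of_continuous (schwartz_withSeminorms 𝕜 D E)
    ((schwartzSeminormFamily 𝕜 F G (k, n)).comp (B : 𝓢(D, E) →ₗ[𝕜] 𝓢(F, G)))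
    (((schwartz_withSeminorms 𝕜 F G).continuous_seminorm (k, n)).comp B.continuous)
  exact ⟨s, C, C.2, fun f => hC f⟩

section CompOfHasDerivAt

variable [NormedSpace 𝕜 F]

variable (𝕜) in
def weightedDerivCLM (w : ℝ → ℝ) : 𝓢(ℝ, F) →L[𝕜] 𝓢(ℝ, F) :=
  smulLeftCLM F (fun x => (w x : 𝕜)) ∘L derivCLM 𝕜 F

variable {g w : ℝ → ℝ}

theorem weightedDerivCLM_apply (hw : w.HasTemperateGrowth) (H : 𝓢(ℝ, F)) (x : ℝ) :
    weightedDerivCLM 𝕜 w H x = w x • deriv H x := by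
  rw [weightedDerivCLM, ContinuousLinearMap.comp_apply, smulLeftCLM_ofReal 𝕜 hw,
    smulLeftCLM_apply_apply hw, derivCLM_apply]

theorem hasDerivAt_comp_of_hasDerivAt (hw : w.HasTemperateGrowth)
    (hg : ∀ t, HasDerivAt g (w (g t)) t) (H : 𝓢(ℝ, F)) (t : ℝ) :
    HasDerivAt (H ∘ g) (weightedDerivCLM 𝕜 w H (g t)) t := by
  rw [weightedDerivCLM_apply hw]
  exact (H.hasDerivAt (g t)).scomp t (hg t)

theorem iteratedDeriv_comp_of_hasDerivAt (hw : w.HasTemperateGrowth)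
    (hg : ∀ t, HasDerivAt g (w (g t)) t) (H : 𝓢(ℝ, F)) (n : ℕ) :
    iteratedDeriv n (H ∘ g) = (weightedDerivCLM 𝕜 w ^ n) H ∘ g := by
  induction n with
  | zero => simp
  | succ n ih =>
    ext t
    rw [iteratedDeriv_succ, ih, (hasDerivAt_comp_of_hasDerivAt (𝕜 := 𝕜) hw hg _ t).deriv,
      pow_succ', mul_apply_eq_comp, Function.comp_apply]

variable (𝕜) in
def compCLMOfHasDerivAt (hw : w.HasTemperateGrowth) (hg : ∀ t, HasDerivAt g (w (g t)) t)
    (hg_le : ∀ t, ‖t‖ ≤ ‖g t‖) : 𝓢(ℝ, F) →L[𝕜] 𝓢(ℝ, F) :=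
  mkCLM (fun H => H ∘ g) (fun _ _ _ => rfl) (fun _ _ _ => rfl)
    (fun H => contDiff_of_differentiable_iteratedDeriv fun n _ => by
      rw [iteratedDeriv_comp_of_hasDerivAt (𝕜 := 𝕜) hw hg]
      exact ((weightedDerivCLM 𝕜 w ^ n) H).differentiable.comp
        fun t => (hg t).differentiableAt)
    fun ⟨k, n⟩ => by
      obtain ⟨s, C, hC, hB⟩ := exists_seminorm_comp_le
        (weightedDerivCLM 𝕜 w ^ n : 𝓢(ℝ, F) →L[𝕜] 𝓢(ℝ, F)) k 0
      refine ⟨s, C, hC, fun H t => ?_⟩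
      rw [norm_iteratedFDeriv_eq_norm_iteratedDeriv,
        iteratedDeriv_comp_of_hasDerivAt (𝕜 := 𝕜) hw hg, Function.comp_apply]
      calc ‖t‖ ^ k * ‖(weightedDerivCLM 𝕜 w ^ n) H (g t)‖
          ≤ ‖g t‖ ^ k * ‖(weightedDerivCLM 𝕜 w ^ n) H (g t)‖ := by
            gcongr
            exact hg_le t
        _ ≤ SchwartzMap.seminorm 𝕜 k 0 ((weightedDerivCLM 𝕜 w ^ n) H) :=
            norm_pow_mul_le_seminorm 𝕜 _ k (g t)
        _ ≤ C * s.sup (schwartzSeminormFamily 𝕜 ℝ F) H := hB H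

@[simp]
theorem compCLMOfHasDerivAt_apply (hw : w.HasTemperateGrowth)
    (hg : ∀ t, HasDerivAt g (w (g t)) t) (hg_le : ∀ t, ‖t‖ ≤ ‖g t‖) (H : 𝓢(ℝ, F)) (t : ℝ) :
    compCLMOfHasDerivAt 𝕜 hw hg hg_le H t = H (g t) :=
  rfl

end CompOfHasDerivAt

end SchwartzMap

end

theorem Real.cosh_eq_sqrt_one_add_sinh_sq (t : ℝ) : Real.cosh t = √(1 + Real.sinh t ^ 2) := by
  rw [← Real.cosh_arsinh, Real.arsinh_sinh]

theorem Real.abs_le_abs_sinh (t : ℝ) : |t| ≤ |Real.sinh t| := by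
  rw [Real.abs_sinh]
  exact Real.self_le_sinh_iff.mpr (abs_nonneg t)

theorem hasTemperateGrowth_sqrt_one_add_sq : (fun u : ℝ => √(1 + u ^ 2)).HasTemperateGrowth := by
  simpa only [Real.sqrt_eq_rpow, Real.norm_eq_abs, sq_abs] using
    Function.hasTemperateGrowth_one_add_norm_sq_rpow ℝ (1 / 2)

/-- The map φ ↦ (t ↦ cosh t · φ(sinh t)) is a continuous linear endomorphism of
the Schwartz space. -/
theorem cosh_comp_sinh_schwartz :
    ∃ T : SchwartzMap ℝ ℂ →L[ℂ] SchwartzMap ℝ ℂ,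
      ∀ (φ : SchwartzMap ℝ ℂ) (t : ℝ),
        T φ t = (Real.cosh t : ℂ) * φ (Real.sinh t) := by
  have hw := hasTemperateGrowth_sqrt_one_add_sq
  have hsinh : ∀ t, HasDerivAt Real.sinh (√(1 + Real.sinh t ^ 2)) t := fun t => by
    simpa only [Real.cosh_eq_sqrt_one_add_sinh_sq] using Real.hasDerivAt_sinh t
  refine ⟨compCLMOfHasDerivAt ℂ hw hsinh Real.abs_le_abs_sinh ∘L
    smulLeftCLM ℂ (fun u => (√(1 + u ^ 2) : ℂ)), fun φ t => ?_⟩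
  rw [ContinuousLinearMap.comp_apply, compCLMOfHasDerivAt_apply,
    smulLeftCLM_apply_apply (by fun_prop), Real.cosh_eq_sqrt_one_add_sinh_sq, smul_eq_mul]
end
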